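/- The initial locus of the undeformed DGR system, i.e. the set of solutions (q,Q,p,P) ∈ ℂ⁴ of the initial equations −2q = p, −2Q = −(1/3)P, −3p = −3q² + (3/2)Q², −3P = 3qQ − (3/2)Q², consists of exactly the four points (0,0,0,0), I₁ = (−4, 4, 8, 24), I₂ = (−18, −24, 36, −144) and I₃ = (−2, 0, 4, 0). -/
import Mathlib


/-- the initial locus of the undeformed DGR system consists of exactly
the origin and the three points I₁ = (−4,4,8,24), I₂ = (−18,−24,36,−144),
I₃ = (−2,0,4,0). -/
theorem dgr_initial_locus :
    {x : ℂ × ℂ × ℂ × ℂ |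
        -2 * x.1 = x.2.2.1 ∧
        -2 * x.2.1 = -(1/3 : ℂ) * x.2.2.2 ∧
        -3 * x.2.2.1 = -3 * x.1 ^ 2 + (3/2 : ℂ) * x.2.1 ^ 2 ∧
        -3 * x.2.2.2 = 3 * x.1 * x.2.1 - (3/2 : ℂ) * x.2.1 ^ 2} =
      {(0, 0, 0, 0), (-4, 4, 8, 24), (-18, -24, 36, -144), (-2, 0, 4, 0)} := by
  ext ⟨q, Q, p, P⟩
  simp only [Set.mem_setOf_eq, Set.mem_insert_iff, Set.mem_singleton_iff, Prod.mk.injEq]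
  constructor
  · rintro ⟨h1, h2, h3, h4⟩
    have hA : Q ^ 2 = 2 * q ^ 2 + 4 * q := by linear_combination (-2/3) * h3 + 2 * h1
    have hB : Q * (q + 6) = q * (q + 2) := by
      linear_combination (-1/3) * h4 - 3 * h2 + (1/2) * hA
    have hkey : q * (q + 2) * (q + 4) * (q + 18) = 0 := by
      linear_combination (Q * (q + 6) + q * (q + 2)) * hB - (q + 6) ^ 2 * hA
    have hp : p = -2 * q := h1.symm
    have hP : P = 6 * Q := by linear_combination 3 * h2
    rcases mul_eq_zero.mp hkey with hq | hq18
    · rcases mul_eq_zero.mp hq with hq | hq4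
      · rcases mul_eq_zero.mp hq with hq0 | hq2
        · -- q = 0
          have hQ : Q = 0 := by
            have : Q ^ 2 = 0 := by rw [hA, hq0]; ring
            exact pow_eq_zero_iff (by norm_num) |>.mp this
          left; subst hq0 hQ; simp [hp, hP]
        · -- q = -2
          have hq0 : q = -2 := by linear_combination hq2
          have hQ : Q = 0 := by
            have : Q ^ 2 = 0 := by rw [hA, hq0]; ring
            exact pow_eq_zero_iff (by norm_num) |>.mp this
          right; right; right; subst hq0 hQ
          refine ⟨rfl, rfl, by rw [hp]; ring, by rw [hP]; ring⟩
      · -- q = -4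
        have hq0 : q = -4 := by linear_combination hq4
        have hQ : Q = 4 := by
          have := hB; rw [hq0] at this
          linear_combination (1/2) * this
        right; left; subst hq0 hQ
        refine ⟨rfl, rfl, by rw [hp]; ring, by rw [hP]; ring⟩
    · -- q = -18
      have hq0 : q = -18 := by linear_combination hq18
      have hQ : Q = -24 := by
        have := hB; rw [hq0] at this
        linear_combination (-1/12) * this
      right; right; left; subst hq0 hQ
      refine ⟨rfl, rfl, by rw [hp]; ring, by rw [hP]; ring⟩
  · rintro (⟨rfl, rfl, rfl, rfl⟩ | ⟨rfl, rfl, rfl, rfl⟩ | ⟨rfl, rfl, rfl, rfl⟩ | ⟨rfl, rfl, rfl, rfl⟩) <;>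
      norm_num
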